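/- arXiv:1401.4264 — 2 statements merged into one kernel-verified Lean document; each statement's English description precedes it below -/
import Mathlib

section
/- Let Ū(t) be the average potential of the N-neuron system and K(t) the number of fires up to time t by neurons whose pre-fire potential is ≤ 2, N(t) the total number of fires. If Ū(t) = Ū(0) + (1/N)∑_i ∫_0^t ((N-1)/N - U_i(s-)) dN_i(s) with Ū(t) ≥ 0 and 0 ≤ U_i(s) for all i,s, then: (a) Ū(t) ≤ Ū(0) + K(t)/N; (b) N(t)/N ≤ Ū(0) + 2 K(t)/N. -/
/-!
A fire with pre-fire potential `u ≤ 2` changes `N Ū` by at most `1`, any other fire by at most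
`-1`, because `(N-1)/N ≤ 1` and `u ≥ 0`. Summing, `N (Ū(t) - Ū(0)) ≤ K - (N(t) - K) = 2K - N(t)`:
this gives (a) since `K ≤ N(t)`, and (b) since `Ū(t) ≥ 0`.
-/

open Finset

lemma sub_le_two_mul_ite_sub_one {c x : ℝ} (hc : c ≤ 1) (hx : 0 ≤ x) :
    c - x ≤ 2 * (if x ≤ 2 then 1 else 0) - 1 := by
  split_ifs <;> linarith

lemma sum_sub_le_two_mul_card_filter_sub_card {ι : Type*} (E : Finset ι) (u : ι → ℝ) {c : ℝ}
    (hc : c ≤ 1) (hu : ∀ e ∈ E, 0 ≤ u e) :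
    ∑ e ∈ E, (c - u e) ≤ 2 * (#(E.filter fun e => u e ≤ 2) : ℝ) - #E :=
  calc ∑ e ∈ E, (c - u e)
      ≤ ∑ e ∈ E, (2 * (if u e ≤ 2 then 1 else 0) - 1) :=
        sum_le_sum fun e he => sub_le_two_mul_ite_sub_one hc (hu e he)
    _ = 2 * (#(E.filter fun e => u e ≤ 2) : ℝ) - #E := by
        rw [sum_sub_distrib, ← mul_sum, sum_boole]
        simp

theorem stmt_4_general (N : ℕ) {ι : Type*} (E : Finset ι) (u : ι → ℝ)
    (hu : ∀ e ∈ E, 0 ≤ u e)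
    (Ubar0 Ubart : ℝ) (ht : 0 ≤ Ubart)
    (hdyn : Ubart = Ubar0 + (1 / N) * ∑ e ∈ E, (((N : ℝ) - 1) / N - u e)) :
    Ubart ≤ Ubar0 + ((E.filter (fun e => u e ≤ 2)).card : ℝ) / N ∧
    (E.card : ℝ) / N ≤ Ubar0 + 2 * ((E.filter (fun e => u e ≤ 2)).card : ℝ) / N := by
  set K : ℝ := (#(E.filter fun e => u e ≤ 2) : ℝ)
  have hK : K ≤ #E := Nat.cast_le.mpr (card_filter_le _ _)
  have hdrift := sum_sub_le_two_mul_card_filter_sub_card E u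
    (div_le_one_of_le₀ (sub_le_self (N : ℝ) zero_le_one) N.cast_nonneg) hu
  have hUbart : Ubart ≤ Ubar0 + (2 * K - #E) / N := by
    rw [hdyn, one_div_mul_eq_div]
    gcongr
  refine ⟨hUbart.trans ?_, ?_⟩
  · gcongr
    linarith
  · rw [sub_div] at hUbart
    linarith

/-- bounds on the average potential and the total number of fires in terms of
the number `K` of fires from neurons with pre-fire potential `≤ 2`. The fire events are
indexed by the finite set `E`, with `u e` the pre-fire potential of the firing neuron at
event `e`; the dynamics of the average is `Ū(t) = Ū(0) + (1/N)∑_e ((N-1)/N - u e)`. -/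
theorem stmt_4 (N : ℕ) (hN : 1 ≤ N) {ι : Type*} (E : Finset ι) (u : ι → ℝ)
    (hu : ∀ e ∈ E, 0 ≤ u e)
    (Ubar0 Ubart : ℝ) (h0 : 0 ≤ Ubar0) (ht : 0 ≤ Ubart)
    (hdyn : Ubart = Ubar0 + (1 / N) * ∑ e ∈ E, (((N : ℝ) - 1) / N - u e)) :
    Ubart ≤ Ubar0 + ((E.filter (fun e => u e ≤ 2)).card : ℝ) / N ∧
    (E.card : ℝ) / N ≤ Ubar0 + 2 * ((E.filter (fun e => u e ≤ 2)).card : ℝ) / N :=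
  stmt_4_general N E u hu Ubar0 Ubart ht hdyn
end

section
/- (Conservation of mass at the boundary.) Suppose ρ_t(x) is a classical solution of ∂_t ρ_t + ∂_x(V(x,ρ_t)ρ_t) = -f ρ_t on (0,∞)×(0,T), with V(x,ρ_t) = -λ(x - ρ̄_t) + p_t, p_t = ∫_0^∞ f ρ_t dx, ρ̄_t = ∫_0^∞ x ρ_t dx, ρ_t having compact support and ∫_0^∞ ρ_t(x)dx = 1 for all t. Then the boundary value satisfies V(0,ρ_t) ρ_t(0) = p_t, i.e., ρ_t(0) = p_t/(p_t + λ ρ̄_t). -/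
open MeasureTheory Set Filter Topology
open scoped Interval

/-! Integrate the PDE over `(0, R)`, beyond which `ρ_t` vanishes. The time-derivative term
integrates to the derivative of the mass, which is zero; the flux term integrates to the
boundary flux `-V(0, ρ_t) ρ_t(0)`; the source term integrates to `-p_t`. -/

theorem setIntegral_Ioi_eq_intervalIntegral_of_eq_zero {g : ℝ → ℝ} {a b : ℝ} (hab : a ≤ b)
    (hg : ∀ x, b ≤ x → g x = 0) :
    ∫ x in Ioi a, g x = ∫ x in a..b, g x := by
  rw [intervalIntegral.integral_of_le hab, ← Ioi_inter_Iic,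
    ← setIntegral_indicator measurableSet_Iic]
  refine setIntegral_congr_fun measurableSet_Ioi fun x _ => ?_
  by_cases hx : x ≤ b
  · rw [indicator_of_mem (mem_Iic.mpr hx)]
  · rw [indicator_of_notMem (by simpa using hx), hg x (not_le.mp hx).le]

theorem hasDerivAt_intervalIntegral_of_continuous {F F' : ℝ → ℝ → ℝ} {a b t : ℝ} {s : Set ℝ}
    (hs : s ∈ 𝓝 t) (hF : Continuous (Function.uncurry F))
    (hF' : Continuous (Function.uncurry F'))
    (hderiv : ∀ τ ∈ s, ∀ x ∈ Ι a b, HasDerivAt (F · x) (F' τ x) τ) :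
    HasDerivAt (fun τ => ∫ x in a..b, F τ x) (∫ x in a..b, F' t x) t := by
  obtain ⟨ε, hε, hεs⟩ := Metric.nhds_basis_closedBall.mem_iff.mp hs
  obtain ⟨M, hM⟩ := ((isCompact_closedBall t ε).prod
    (isCompact_uIcc : IsCompact [[a, b]])).exists_bound_of_continuousOn hF'.continuousOn
  refine (intervalIntegral.hasDerivAt_integral_of_dominated_loc_of_deriv_le (bound := fun _ => M)
    (Metric.closedBall_mem_nhds t hε)
    (Eventually.of_forall fun τ => (hF.uncurry_left τ).aestronglyMeasurable)
    ((hF.uncurry_left t).intervalIntegrable a b) (hF'.uncurry_left t).aestronglyMeasurable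
    ?_ intervalIntegrable_const ?_).2
  · exact ae_of_all _ fun x hx τ hτ => hM (τ, x) ⟨hτ, uIoc_subset_uIcc hx⟩
  · exact ae_of_all _ fun x hx τ hτ => hderiv τ (hεs hτ) x hx

theorem stmt_18_general (lam T : ℝ)
    (f : ℝ → ℝ)
    (ρ : ℝ → ℝ → ℝ)
    (hρcont : Continuous (Function.uncurry ρ))
    (R : ℝ) (hR : 0 < R) (hsupp : ∀ t x, R ≤ x → ρ t x = 0)
    (p ρbar : ℝ → ℝ)
    (hp : ∀ t, p t = ∫ x in Set.Ioi (0:ℝ), f x * ρ t x)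
    (V : ℝ → ℝ → ℝ) (hV : ∀ t x, V t x = -(lam * (x - ρbar t)) + p t)
    (hmass : ∀ t ∈ Set.Icc (0:ℝ) T, ∫ x in Set.Ioi (0:ℝ), ρ t x = 1)
    (Dt Dx : ℝ → ℝ → ℝ)
    (hDt : ∀ t ∈ Set.Ioo (0:ℝ) T, ∀ x : ℝ, 0 < x →
      HasDerivAt (fun τ => ρ τ x) (Dt t x) t)
    (hDx : ∀ t ∈ Set.Ioo (0:ℝ) T, ∀ x : ℝ, 0 < x →
      HasDerivAt (fun y => V t y * ρ t y) (Dx t x) x)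
    (hDtcont : Continuous (Function.uncurry Dt))
    (hDxcont : Continuous (Function.uncurry Dx))
    (hpde : ∀ t ∈ Set.Ioo (0:ℝ) T, ∀ x : ℝ, 0 < x →
      Dt t x + Dx t x = -(f x * ρ t x))
    (hpos : ∀ t ∈ Set.Ioo (0:ℝ) T, 0 < p t + lam * ρbar t) :
    ∀ t ∈ Set.Ioo (0:ℝ) T,
      V t 0 * ρ t 0 = p t ∧ ρ t 0 = p t / (p t + lam * ρbar t) := by
  intro t ht
  have hIoc : Ι 0 R = Ioc 0 R := uIoc_of_le hR.le
  have hmass_R : ∀ᶠ τ in 𝓝 t, ∫ x in 0..R, ρ τ x = 1 := by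
    filter_upwards [isOpen_Ioo.mem_nhds ht] with τ hτ
    rw [← setIntegral_Ioi_eq_intervalIntegral_of_eq_zero hR.le (hsupp τ)]
    exact hmass τ (Ioo_subset_Icc_self hτ)
  have hDt_int : ∫ x in 0..R, Dt t x = 0 :=
    (hasDerivAt_intervalIntegral_of_continuous (isOpen_Ioo.mem_nhds ht) hρcont hDtcont
      fun τ hτ x hx => hDt τ hτ x (hIoc ▸ hx).1).unique
      ((hasDerivAt_const t 1).congr_of_eventuallyEq hmass_R)
  have hDx_int : ∫ x in 0..R, Dx t x = -(V t 0 * ρ t 0) := by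
    have hflux_cont : Continuous fun y => V t y * ρ t y :=
      ((continuous_congr (hV t)).mpr (by fun_prop)).mul (hρcont.uncurry_left t)
    rw [intervalIntegral.integral_eq_sub_of_hasDerivAt_of_le hR.le hflux_cont.continuousOn
      (fun x hx => hDx t ht x hx.1)
      ((hDxcont.uncurry_left t).intervalIntegrable 0 R),
      hsupp t R le_rfl, mul_zero, zero_sub]
  have hp_R : ∫ x in 0..R, f x * ρ t x = p t := by
    rw [hp, setIntegral_Ioi_eq_intervalIntegral_of_eq_zero hR.le
      (fun x hx => by rw [hsupp t x hx, mul_zero])]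
  have hflux : V t 0 * ρ t 0 = p t := by
    have hpde_int : ∫ x in 0..R, (Dt t x + Dx t x) = ∫ x in 0..R, -(f x * ρ t x) :=
      intervalIntegral.integral_congr_ae
        (ae_of_all _ fun x hx => hpde t ht x (hIoc ▸ hx).1)
    rw [intervalIntegral.integral_add
      ((hDtcont.uncurry_left t).intervalIntegrable 0 R)
      ((hDxcont.uncurry_left t).intervalIntegrable 0 R),
      intervalIntegral.integral_neg, hDt_int, hDx_int, hp_R] at hpde_int
    linarith
  refine ⟨hflux, ?_⟩
  have hV0 : V t 0 = p t + lam * ρbar t := by rw [hV]; ring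
  rw [eq_div_iff (hpos t ht).ne', ← hV0, mul_comm, hflux]

/-- conservation of mass at the boundary. If `ρ_t(x)` is a classical solution
of `∂_t ρ + ∂_x(V(x,ρ_t) ρ) = -f ρ` on `(0,T)×(0,∞)` with `V(x,ρ_t) = -λ(x-ρ̄_t) + p_t`,
`p_t = ∫ f ρ_t`, `ρ̄_t = ∫ x ρ_t`, compact support in `x` and total mass `1` at all times,
then `V(0,ρ_t) ρ_t(0) = p_t`, i.e. `ρ_t(0) = p_t/(p_t + λ ρ̄_t)`. -/
theorem stmt_18 (lam T fstar : ℝ) (hlam : 0 ≤ lam) (hT : 0 < T)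
    (f : ℝ → ℝ) (hf : Continuous f) (hfnn : ∀ x, 0 ≤ f x) (hfb : ∀ x, f x ≤ fstar)
    (ρ : ℝ → ℝ → ℝ) (hρnn : ∀ t x, 0 ≤ ρ t x)
    (hρcont : Continuous (Function.uncurry ρ))
    (R : ℝ) (hR : 0 < R) (hsupp : ∀ t x, R ≤ x → ρ t x = 0)
    (p ρbar : ℝ → ℝ)
    (hp : ∀ t, p t = ∫ x in Set.Ioi (0:ℝ), f x * ρ t x)
    (hρbar : ∀ t, ρbar t = ∫ x in Set.Ioi (0:ℝ), x * ρ t x)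
    (V : ℝ → ℝ → ℝ) (hV : ∀ t x, V t x = -(lam * (x - ρbar t)) + p t)
    (hmass : ∀ t ∈ Set.Icc (0:ℝ) T, ∫ x in Set.Ioi (0:ℝ), ρ t x = 1)
    (Dt Dx : ℝ → ℝ → ℝ)
    (hDt : ∀ t ∈ Set.Ioo (0:ℝ) T, ∀ x : ℝ, 0 < x →
      HasDerivAt (fun τ => ρ τ x) (Dt t x) t)
    (hDx : ∀ t ∈ Set.Ioo (0:ℝ) T, ∀ x : ℝ, 0 < x →
      HasDerivAt (fun y => V t y * ρ t y) (Dx t x) x)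
    (hDtcont : Continuous (Function.uncurry Dt))
    (hDxcont : Continuous (Function.uncurry Dx))
    (hpde : ∀ t ∈ Set.Ioo (0:ℝ) T, ∀ x : ℝ, 0 < x →
      Dt t x + Dx t x = -(f x * ρ t x))
    (hpos : ∀ t ∈ Set.Ioo (0:ℝ) T, 0 < p t + lam * ρbar t) :
    ∀ t ∈ Set.Ioo (0:ℝ) T,
      V t 0 * ρ t 0 = p t ∧ ρ t 0 = p t / (p t + lam * ρbar t) :=
  stmt_18_general lam T f ρ hρcont R hR hsupp p ρbar hp V hV hmass Dt Dx hDt hDx hDtcont hDxcont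
    hpde hpos
end
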